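/- Fix p, q ≥ 1 and let Sr(n,p,q) be the number of nonempty sets F ⊆ {1,...,n} with p·min F ≥ |F| such that F is a singleton or an arithmetic progression of common difference q. Then Sr(n+1,p,q) - Sr(n,p,q) = ⌊p(n+q+1)/(pq+1)⌋ for all n ≥ 1. -/

import Mathlib

/-- F is a singleton or an arithmetic progression with common difference q. -/
def IsAP (q : ℕ) (F : Finset ℕ) : Prop :=
  F.card = 1 ∨ ∃ a m : ℕ, 2 ≤ m ∧ F = (Finset.range m).image (fun i => a + q * i)

/-- Number of nonempty F ⊆ {1,...,n} with p·min F ≥ |F| that are singletons or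
arithmetic progressions of common difference q. -/
noncomputable def Sr (n p q : ℕ) : ℕ :=
  Nat.card {F : Finset ℕ //
    F.Nonempty ∧ F ⊆ Finset.Icc 1 n ∧
    p * sInf (F : Set ℕ) ≥ F.card ∧ IsAP q F}

/-!
A nonempty progression `{a, a + q, …, a + k q}` is determined by its minimum `a` and its number
`k` of steps, so `Sr n p q` counts the pairs `(a, k)` with `1 ≤ a`, `a + q k ≤ n` and
`k + 1 ≤ p a`. Going from `n` to `n + 1` adds exactly the pairs with `a + q k = n + 1`; for those,
`p (n + q + 1) = (k + 1) p q + p a`, so `k + 1 ≤ p a` holds iff `(k + 1)(p q + 1) ≤ p (n + q + 1)`,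
i.e. iff `k < ⌊p (n + q + 1) / (p q + 1)⌋`.
-/

def arithProg (q a m : ℕ) : Finset ℕ := (Finset.range m).image (fun i => a + q * i)

section arithProg

variable {q a m k : ℕ}

theorem mem_arithProg {x : ℕ} : x ∈ arithProg q a m ↔ ∃ i < m, a + q * i = x := by
  simp [arithProg]

theorem card_arithProg (hq : 0 < q) : (arithProg q a m).card = m := by
  rw [arithProg, Finset.card_image_of_injective _
    fun i j h => Nat.eq_of_mul_eq_mul_left hq (Nat.add_left_cancel h), Finset.card_range]

theorem isLeast_arithProg (hm : 0 < m) : IsLeast (arithProg q a m : Set ℕ) a := by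
  refine ⟨mem_arithProg.2 ⟨0, hm, by simp⟩, ?_⟩
  rintro x hx
  obtain ⟨i, -, rfl⟩ := mem_arithProg.1 hx
  exact Nat.le_add_right a (q * i)

theorem sInf_arithProg (hm : 0 < m) : sInf (arithProg q a m : Set ℕ) = a :=
  (isLeast_arithProg hm).csInf_eq

theorem isGreatest_arithProg : IsGreatest (arithProg q a (k + 1) : Set ℕ) (a + q * k) := by
  refine ⟨mem_arithProg.2 ⟨k, k.lt_succ_self, rfl⟩, ?_⟩
  rintro x hx
  obtain ⟨i, hi, rfl⟩ := mem_arithProg.1 hx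
  exact Nat.add_le_add_left (Nat.mul_le_mul_left q (Nat.le_of_lt_succ hi)) a

theorem arithProg_subset_Icc_iff {n : ℕ} :
    arithProg q a (k + 1) ⊆ Finset.Icc 1 n ↔ 1 ≤ a ∧ a + q * k ≤ n := by
  have hmin := isLeast_arithProg (q := q) (a := a) k.succ_pos
  have hmax := isGreatest_arithProg (q := q) (a := a) (k := k)
  constructor
  · intro h
    exact ⟨(Finset.mem_Icc.1 (h hmin.1)).1, (Finset.mem_Icc.1 (h hmax.1)).2⟩
  · rintro ⟨ha, hn⟩ x hx
    exact Finset.mem_Icc.2 ⟨ha.trans (hmin.2 hx), (hmax.2 hx).trans hn⟩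

theorem injective_arithProg (hq : 0 < q) :
    Function.Injective fun x : ℕ × ℕ => arithProg q x.1 (x.2 + 1) := by
  rintro ⟨a, k⟩ ⟨b, l⟩ h
  have hab : a = b := by
    simpa only [sInf_arithProg k.succ_pos, sInf_arithProg l.succ_pos] using
      congrArg (fun F : Finset ℕ => sInf (F : Set ℕ)) h
  have hkl : k + 1 = l + 1 := by
    simpa only [card_arithProg hq] using congrArg Finset.card h
  rw [hab, Nat.succ_injective hkl]

end arithProg

theorem nonempty_isAP_iff {q : ℕ} {F : Finset ℕ} :
    F.Nonempty ∧ IsAP q F ↔ ∃ a k, arithProg q a (k + 1) = F := by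
  constructor
  · rintro ⟨-, h | ⟨a, m, hm, rfl⟩⟩
    · obtain ⟨x, rfl⟩ := Finset.card_eq_one.1 h
      exact ⟨x, 0, by simp [arithProg]⟩
    · exact ⟨a, m - 1, by rw [Nat.sub_add_cancel (by omega)]; rfl⟩
  · rintro ⟨a, k, rfl⟩
    refine ⟨⟨a, (isLeast_arithProg k.succ_pos).1⟩, ?_⟩
    rcases k with _ | k
    · exact Or.inl (by simp [arithProg])
    · exact Or.inr ⟨a, k + 2, by omega, rfl⟩

/-- The pair `(a, k)` stands for the progression `{a, a + q, …, a + k q}` of length `k + 1`. -/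
def apParams (n p q : ℕ) : Finset (ℕ × ℕ) :=
  (Finset.Icc 1 n ×ˢ Finset.range (p * n)).filter
    fun x => x.1 + q * x.2 ≤ n ∧ x.2 + 1 ≤ p * x.1

theorem mem_apParams {n p q a k : ℕ} :
    (a, k) ∈ apParams n p q ↔ 1 ≤ a ∧ a + q * k ≤ n ∧ k + 1 ≤ p * a := by
  simp only [apParams, Finset.mem_filter, Finset.mem_product, Finset.mem_Icc, Finset.mem_range]
  constructor
  · rintro ⟨⟨⟨ha, -⟩, -⟩, hn, hk⟩
    exact ⟨ha, hn, hk⟩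
  · rintro ⟨ha, hn, hk⟩
    have : p * a ≤ p * n := Nat.mul_le_mul_left p (by omega)
    exact ⟨⟨⟨ha, by omega⟩, by omega⟩, hn, hk⟩

theorem Sr_eq_card_apParams {n p q : ℕ} (hq : 0 < q) : Sr n p q = (apParams n p q).card := by
  classical
  have hmem : ∀ F : Finset ℕ,
      (F.Nonempty ∧ F ⊆ Finset.Icc 1 n ∧ p * sInf (F : Set ℕ) ≥ F.card ∧ IsAP q F) ↔
        F ∈ (apParams n p q).image fun x => arithProg q x.1 (x.2 + 1) := by
    intro F
    rw [Finset.mem_image]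
    constructor
    · rintro ⟨hne, hsub, hp, hap⟩
      obtain ⟨a, k, rfl⟩ := nonempty_isAP_iff.1 ⟨hne, hap⟩
      rw [card_arithProg hq, sInf_arithProg k.succ_pos] at hp
      obtain ⟨ha, hn⟩ := arithProg_subset_Icc_iff.1 hsub
      exact ⟨(a, k), mem_apParams.2 ⟨ha, hn, hp⟩, rfl⟩
    · rintro ⟨⟨a, k⟩, hx, rfl⟩
      obtain ⟨ha, hn, hk⟩ := mem_apParams.1 hx
      obtain ⟨hne, hap⟩ := nonempty_isAP_iff.2 ⟨a, k, rfl⟩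
      refine ⟨hne, arithProg_subset_Icc_iff.2 ⟨ha, hn⟩, ?_, hap⟩
      rwa [card_arithProg hq, sInf_arithProg k.succ_pos]
  rw [Sr, Nat.card_congr (Equiv.subtypeEquivRight hmem), Nat.card_eq_fintype_card,
    Fintype.card_coe, Finset.card_image_of_injective _ (injective_arithProg hq)]

section step

variable {n p q k : ℕ}

theorem mul_le_of_lt_div (h : k < p * (n + q + 1) / (p * q + 1)) : q * k ≤ n := by
  rw [Nat.lt_iff_add_one_le, Nat.le_div_iff_mul_le (by positivity), mul_add_one] at h
  by_contra! hlt
  have : p * (n + q + 1) ≤ (k + 1) * (p * q) :=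
    calc p * (n + q + 1) ≤ p * (q * k + q) := Nat.mul_le_mul_left p (by omega)
      _ = (k + 1) * (p * q) := by ring
  omega

theorem lt_div_iff_of_add_eq {a : ℕ} (h : a + q * k = n + 1) :
    k < p * (n + q + 1) / (p * q + 1) ↔ k + 1 ≤ p * a := by
  have : p * (n + q + 1) = (k + 1) * (p * q) + p * a := by
    rw [show n + q + 1 = a + q * k + q by omega]
    ring
  rw [Nat.lt_iff_add_one_le, Nat.le_div_iff_mul_le (by positivity), this, mul_add_one,
    add_le_add_iff_left]

theorem apParams_succ :
    apParams (n + 1) p q = apParams n p q ∪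
      (Finset.range (p * (n + q + 1) / (p * q + 1))).image fun k => (n + 1 - q * k, k) := by
  ext ⟨a, k⟩
  simp only [Finset.mem_union, mem_apParams, Finset.mem_image, Finset.mem_range, Prod.mk.injEq,
    exists_eq_right_right]
  constructor
  · rintro ⟨ha, hn, hk⟩
    by_cases hlt : a + q * k ≤ n
    · exact Or.inl ⟨ha, hlt, hk⟩
    · exact Or.inr ⟨(lt_div_iff_of_add_eq (by omega)).2 hk, by omega⟩
  · rintro (⟨ha, hn, hk⟩ | ⟨hk, rfl⟩)
    · exact ⟨ha, by omega, hk⟩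
    · have hqk := mul_le_of_lt_div hk
      have hsum : n + 1 - q * k + q * k = n + 1 := by omega
      exact ⟨by omega, hsum.le, (lt_div_iff_of_add_eq hsum).1 hk⟩

theorem disjoint_apParams_image :
    Disjoint (apParams n p q)
      ((Finset.range (p * (n + q + 1) / (p * q + 1))).image fun k => (n + 1 - q * k, k)) := by
  simp only [Finset.disjoint_left, Finset.mem_image, Finset.mem_range, Prod.forall,
    Prod.mk.injEq, mem_apParams, not_exists, not_and]
  rintro a k ⟨-, hn, -⟩ j hj rfl rfl
  have := mul_le_of_lt_div hj
  omega

theorem card_apParams_succ :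
    (apParams (n + 1) p q).card = (apParams n p q).card + p * (n + q + 1) / (p * q + 1) := by
  rw [apParams_succ, Finset.card_union_of_disjoint disjoint_apParams_image,
    Finset.card_image_of_injective _ fun _ _ h => congrArg Prod.snd h, Finset.card_range]

end step

theorem stmt_10_general (p q : ℕ) (hq : 1 ≤ q) :
    ∀ n : ℕ, 1 ≤ n →
      Sr (n + 1) p q - Sr n p q = p * (n + q + 1) / (p * q + 1) := by
  intro n _
  rw [Sr_eq_card_apParams hq, Sr_eq_card_apParams hq, card_apParams_succ, Nat.add_sub_cancel_left]

theorem stmt_10 (p q : ℕ) (hp : 1 ≤ p) (hq : 1 ≤ q) :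
    ∀ n : ℕ, 1 ≤ n →
      Sr (n + 1) p q - Sr n p q = p * (n + q + 1) / (p * q + 1) :=
  stmt_10_general p q hq
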